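/- For arbitrarily large n there exists an n-vertex strongly connected oriented graph D with c(D) ≥ √n / 4 whose coreset contraction Y is a directed 4-cycle, so that c(Y) = 2. -/

import Mathlib

open Classical

universe u

namespace CopsRobbers

variable {V : Type u}

/-- `CatchIn A k t c r` holds when, in the cops-and-robbers game on the digraph
with arc relation `A`, with the `k` cops currently at positions `c`, the robber
currently at `r`, and the cops to move, the cops can guarantee that some cop
occupies the robber's vertex within `t` further rounds (in each round every cop
either stays or moves along an out-arc, then the robber either stays or moves
along an out-arc; capture may occur right after the cops' move or after the
robber's move). -/
inductive CatchIn (A : V → V → Prop) (k : ℕ) : ℕ → (Fin k → V) → V → Prop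
  | caught {t : ℕ} {c : Fin k → V} {r : V} (h : ∃ i, c i = r) : CatchIn A k t c r
  | stepCatch {t : ℕ} {c : Fin k → V} {r : V} (c' : Fin k → V)
      (hc : ∀ i, c' i = c i ∨ A (c i) (c' i)) (h : ∃ i, c' i = r) :
      CatchIn A k (t + 1) c r
  | step {t : ℕ} {c : Fin k → V} {r : V} (c' : Fin k → V)
      (hc : ∀ i, c' i = c i ∨ A (c i) (c' i))
      (h : ∀ r' : V, r' = r ∨ A r r' → CatchIn A k t c' r') :
      CatchIn A k (t + 1) c r

/-- `k` cops can choose initial positions guaranteeing capture within `t` rounds,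
no matter which starting vertex the robber then chooses. -/
def CopsWinIn (A : V → V → Prop) (k t : ℕ) : Prop :=
  ∃ c : Fin k → V, ∀ r : V, CatchIn A k t c r

/-- `k` cops have a winning strategy on the digraph with arc relation `A`. -/
def CopsWin (A : V → V → Prop) (k : ℕ) : Prop := ∃ t, CopsWinIn A k t

/-- The cop number of a digraph: the least `k` such that `k` cops have a winning
strategy. -/
noncomputable def copNumber (A : V → V → Prop) : ℕ := sInf {k | CopsWin A k}

/-- The capture time of a digraph: the least `t` such that `copNumber A` cops
can guarantee capture within `t` rounds. -/
noncomputable def captureTime (A : V → V → Prop) : ℕ :=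
  sInf {t | CopsWinIn A (copNumber A) t}

/-- `A` is an orientation of the simple graph `G`: each edge of `G` is given
exactly one direction, and there are no other arcs. -/
def IsOrientation (G : SimpleGraph V) (A : V → V → Prop) : Prop :=
  (∀ u v, G.Adj u v ↔ (A u v ∨ A v u)) ∧ ∀ u v, A u v → ¬ A v u

/-- An oriented graph: a digraph with no loops and no pair of opposite arcs. -/
def IsOriented (A : V → V → Prop) : Prop := ∀ u v, A u v → ¬ A v u

/-- A digraph is strongly connected if every vertex is reachable from every
other by a directed path. -/
def StronglyConnected (A : V → V → Prop) : Prop :=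
  ∀ u v : V, Relation.ReflTransGen A u v


/-- Out-neighbourhood of a set of vertices. -/
def outN (A : V → V → Prop) (X : Set V) : Set V := {v | ∃ x ∈ X, A x v}

/-- In-neighbourhood of a set of vertices. -/
def inN (A : V → V → Prop) (Y : Set V) : Set V := {u | ∃ y ∈ Y, A u y}

/-- A coreset (coreflexive set): a minimal nonempty set `X` of vertices with
`N⁻(N⁺(X)) = X`. -/
def IsCoreset (A : V → V → Prop) (X : Set V) : Prop :=
  X.Nonempty ∧ inN A (outN A X) = X ∧
    ∀ Y : Set V, Y.Nonempty → inN A (outN A Y) = Y → Y ⊆ X → Y = X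

/-- The vertices of the coreset contraction: the coresets of `A`. -/
def Coreset (A : V → V → Prop) : Type _ := {X : Set V // IsCoreset A X}

/-- The arc relation of the coreset contraction: an arc from coreset `U` to
coreset `W` (with `U ≠ W`) when `A` has an arc from some vertex of `U` to some
vertex of `W`. -/
def coresetContraction (A : V → V → Prop) : Coreset A → Coreset A → Prop :=
  fun U W => U ≠ W ∧ ∃ u ∈ U.val, ∃ w ∈ W.val, A u w

/-! Take four layers, each a copy of the lines `y = a x + b` over a finite field with `q`
elements, and let a line point to those lines of the next layer whose (slope, intercept), read as
a point, lies on it. Two lines of a layer with different slopes meet, hence share an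
out-neighbour, so the layers are exactly the coresets and the coreset contraction is the directed
4-cycle, on which two cops win and one does not. Against `k ≤ q` cops the robber never gets
caught: from a vertex no cop attacks he has `q + 1` options, and each cop attacks at most one of
them, because two distinct lines meet in at most one point. For `q` prime and `n = 4 q²` this
gives `c(D) > q ≥ √n / 4`. -/

section Game

open Finset

variable {A : V → V → Prop} {k : ℕ}

/-- The robber at `r` cannot be caught during the cops' next move. -/
def Safe (A : V → V → Prop) (c : Fin k → V) (r : V) : Prop :=
  ∀ i, c i ≠ r ∧ ¬ A (c i) r

def CanStaySafe (A : V → V → Prop) (k : ℕ) : Prop :=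
  ∀ (c : Fin k → V) r, (∀ i, c i ≠ r) → ∃ r', (r' = r ∨ A r r') ∧ Safe A c r'

theorem not_catchIn_of_safe (hmove : CanStaySafe A k) {t : ℕ} {c : Fin k → V} {r : V}
    (hsafe : Safe A c r) : ¬ CatchIn A k t c r := by
  intro h
  induction h with
  | caught h =>
    obtain ⟨i, hi⟩ := h
    exact (hsafe i).1 hi
  | stepCatch c' hc h =>
    obtain ⟨i, rfl⟩ := h
    rcases hc i with h | h
    · exact (hsafe i).1 h.symm
    · exact (hsafe i).2 h
  | step c' hc _ ih =>
    have hfree : ∀ i, c' i ≠ _ := fun i hi => by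
      rcases hc i with h | h
      · exact (hsafe i).1 (h ▸ hi)
      · exact (hsafe i).2 (hi ▸ h)
    obtain ⟨r', hr', hsafe'⟩ := hmove c' _ hfree
    exact ih r' hr' hsafe'

theorem not_copsWin_of_safe (hstart : ∀ c : Fin k → V, ∃ r, Safe A c r)
    (hmove : CanStaySafe A k) : ¬ CopsWin A k := by
  rintro ⟨t, c, hwin⟩
  obtain ⟨r, hr⟩ := hstart c
  exact not_catchIn_of_safe hmove hr (hwin r)

theorem exists_safe_of_card_lt [DecidableEq V] (c : Fin k → V) (O : Finset V) (m : ℕ)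
    (hthreat : ∀ i, #(O.filter fun v => c i = v ∨ A (c i) v) ≤ m) (hO : k * m < #O) :
    ∃ v ∈ O, Safe A c v := by
  set T := univ.biUnion fun i => O.filter fun v => c i = v ∨ A (c i) v
  have hT : #T < #O :=
    (card_biUnion_le_card_mul _ _ m fun i _ => hthreat i).trans_lt (by simpa using hO)
  obtain ⟨v, hvO, hvT⟩ := exists_mem_notMem_of_card_lt_card hT
  refine ⟨v, hvO, fun i => ?_⟩
  have : ¬ (c i = v ∨ A (c i) v) := fun h =>
    hvT (mem_biUnion.2 ⟨i, mem_univ _, mem_filter.2 ⟨hvO, h⟩⟩)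
  tauto

theorem copsWin_card [Fintype V] (A : V → V → Prop) : CopsWin A (Fintype.card V) :=
  ⟨0, (Fintype.equivFin V).symm, fun r => .caught ⟨Fintype.equivFin V r, by simp⟩⟩

theorem copNumber_le (h : CopsWin A k) : copNumber A ≤ k := Nat.sInf_le h

theorem lt_copNumber {m : ℕ} (hwin : ∃ k, CopsWin A k) (hlose : ∀ k ≤ m, ¬ CopsWin A k) :
    m < copNumber A := by
  by_contra h
  exact hlose _ (not_lt.1 h) (Nat.sInf_mem hwin)

theorem catchIn_relIso {W : Type*} {B : W → W → Prop} (e : A ≃r B) {t : ℕ} {c : Fin k → V}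
    {r : V} (h : CatchIn A k t c r) : CatchIn B k t (e ∘ c) (e r) := by
  induction h with
  | caught h => exact .caught (h.imp fun i hi => congrArg e hi)
  | stepCatch c' hc h =>
    exact .stepCatch (e ∘ c') (fun i => (hc i).imp (congrArg e) e.map_rel_iff.2)
      (h.imp fun i hi => congrArg e hi)
  | step c' hc _ ih =>
    refine .step (e ∘ c') (fun i => (hc i).imp (congrArg e) e.map_rel_iff.2) fun r' hr' => ?_
    simpa using ih (e.symm r') (hr'.imp e.symm_apply_eq.2 fun h =>
      e.map_rel_iff.1 (by rwa [e.apply_symm_apply]))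

theorem copsWin_relIso {W : Type*} {B : W → W → Prop} (e : A ≃r B) (h : CopsWin A k) :
    CopsWin B k := by
  obtain ⟨t, c, hc⟩ := h
  exact ⟨t, e ∘ c, fun r => by simpa using catchIn_relIso e (hc (e.symm r))⟩

theorem copNumber_congr {W : Type*} {B : W → W → Prop} (e : A ≃r B) :
    copNumber A = copNumber B :=
  congrArg sInf (Set.ext fun _ => ⟨copsWin_relIso e, copsWin_relIso e.symm⟩)

end Game

section Cycle

def cycle4 (i j : ZMod 4) : Prop := j = i + 1

theorem copsWin_cycle4_two : CopsWin cycle4 2 := by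
  refine ⟨1, ![0, 2], fun r => ?_⟩
  obtain ⟨c', hc', hcatch⟩ : ∃ c' : Fin 2 → ZMod 4,
      (∀ i, c' i = ![0, 2] i ∨ c' i = ![0, 2] i + 1) ∧ ∃ i, c' i = r := by
    revert r; decide
  exact .stepCatch c' hc' hcatch

theorem not_copsWin_cycle4 {k : ℕ} (hk : k ≤ 1) : ¬ CopsWin cycle4 k := by
  interval_cases k <;> refine not_copsWin_of_safe ?_ ?_ <;>
    dsimp only [CanStaySafe, Safe, cycle4] <;> decide

theorem copNumber_cycle4 : copNumber cycle4 = 2 :=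
  le_antisymm (copNumber_le copsWin_cycle4_two)
    (lt_copNumber ⟨2, copsWin_cycle4_two⟩ fun _ => not_copsWin_cycle4)

end Cycle

section Plane

open Relation

variable (R : Type*) [CommRing R]

/-- Vertex `(i, a, b)` is the line `y = a x + b` in layer `i`. Its out-neighbours are the points
`(c, a c + b)` of that line, each read in layer `i + 1` as the line with slope `c` and
intercept `a c + b`. -/
def planeArc (u v : ZMod 4 × R × R) : Prop :=
  v.1 = u.1 + 1 ∧ v.2.2 = u.2.1 * v.2.1 + u.2.2

variable {R}

theorem planeArc_mk (i : ZMod 4) (a b c : R) : planeArc R (i, a, b) (i + 1, c, a * c + b) :=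
  ⟨rfl, rfl⟩

theorem isOriented_planeArc : IsOriented (planeArc R) := by
  rintro u v ⟨huv, -⟩ ⟨hvu, -⟩
  have : (2 : ZMod 4) = 0 := by linear_combination -(huv + hvu)
  exact absurd this (by decide)

/-- The path turns through the slopes `1 - g` and `h - a (1 - g) - b`; the final intercept
collapses because the last two slopes add up to `1`. -/
theorem reflTransGen_planeArc_add_three (u : ZMod 4 × R × R) (y : R × R) :
    ReflTransGen (planeArc R) u (u.1 + 3, y) := by
  obtain ⟨i, a, b⟩ := u
  obtain ⟨g, h⟩ := y
  set c := h - (a * (1 - g) + b)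
  have h₁ := planeArc_mk i a b (1 - g)
  have h₂ := planeArc_mk (i + 1) (1 - g) (a * (1 - g) + b) c
  have h₃ : planeArc R (i + 1 + 1, c, (1 - g) * c + (a * (1 - g) + b)) (i + 3, g, h) :=
    ⟨by ring, by ring⟩
  exact ((ReflTransGen.single h₁).tail h₂).tail h₃

theorem reflTransGen_planeArc (n : ℕ) (u : ZMod 4 × R × R) (y : R × R) :
    ReflTransGen (planeArc R) u (u.1 + 3 * (n + 1 : ℕ), y) := by
  induction n generalizing y with
  | zero => simpa using reflTransGen_planeArc_add_three u y
  | succ n ih =>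
    rw [show u.1 + 3 * ((n + 1 + 1 : ℕ) : ZMod 4) = u.1 + 3 * ((n + 1 : ℕ) : ZMod 4) + 3 by
      push_cast; ring]
    exact (ih (0, 0)).trans (reflTransGen_planeArc_add_three _ y)

theorem stronglyConnected_planeArc : StronglyConnected (planeArc R) := by
  intro u v
  have h4 : (4 : ZMod 4) = 0 := by decide
  obtain ⟨n, hn⟩ : ∃ n : ℕ, v.1 = u.1 + 3 * (n + 1 : ℕ) :=
    ⟨(3 * (v.1 - u.1) - 1).val, by
      rw [Nat.cast_add, ZMod.natCast_zmod_val]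
      linear_combination (2 * (u.1 - v.1)) * h4⟩
  have h := reflTransGen_planeArc n u v.2
  rwa [← hn] at h

end Plane

theorem mem_of_inN_outN_eq {A : V → V → Prop} {Y : Set V} (hY : inN A (outN A Y) = Y)
    {u w z : V} (hu : u ∈ Y) (huw : A u w) (hzw : A z w) : z ∈ Y :=
  hY ▸ ⟨w, ⟨u, hu, huw⟩, hzw⟩

section Layers

variable (R : Type*) [CommRing R]

def layer (i : ZMod 4) : Set (ZMod 4 × R × R) := {v | v.1 = i}

variable {R}

theorem inN_outN_layer (i : ZMod 4) :
    inN (planeArc R) (outN (planeArc R) (layer R i)) = layer R i := by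
  ext u
  constructor
  · rintro ⟨w, ⟨x, hx, hxw⟩, huw⟩
    exact add_right_cancel (huw.1.symm.trans (hxw.1.trans (congrArg (· + 1) hx)))
  · intro hu
    exact ⟨_, ⟨u, hu, planeArc_mk u.1 u.2.1 u.2.2 0⟩, planeArc_mk u.1 u.2.1 u.2.2 0⟩

variable {F : Type*} [Field F]

theorem exists_planeArc_planeArc (i : ZMod 4) {a a' : F} (b b' : F) (h : a ≠ a') :
    ∃ w, planeArc F (i, a, b) w ∧ planeArc F (i, a', b') w := by
  have h' : a - a' ≠ 0 := sub_ne_zero.2 h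
  refine ⟨_, planeArc_mk i a b ((b' - b) / (a - a')), rfl, ?_⟩
  field_simp
  ring

theorem layer_subset_of_inN_outN_eq {Y : Set (ZMod 4 × F × F)}
    (hY : inN (planeArc F) (outN (planeArc F) Y) = Y) {u : ZMod 4 × F × F} (hu : u ∈ Y) :
    layer F u.1 ⊆ Y := by
  obtain ⟨i, a, b⟩ := u
  have hmove {a a' b b' : F} (h : a ≠ a') (hmem : (i, a, b) ∈ Y) : (i, a', b') ∈ Y := by
    obtain ⟨w, hw, hw'⟩ := exists_planeArc_planeArc i b b' h
    exact mem_of_inN_outN_eq hY hmem hw hw'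
  rintro ⟨j, a', b'⟩ (rfl : j = i)
  by_cases haa' : a = a'
  · subst haa'
    exact hmove (by simp) (hmove (a' := a + 1) (b' := b) (by simp) hu)
  · exact hmove haa' hu

theorem isCoreset_layer (i : ZMod 4) : IsCoreset (planeArc F) (layer F i) := by
  refine ⟨⟨(i, 0, 0), rfl⟩, inN_outN_layer i, fun Y ⟨u, hu⟩ hY hsub => ?_⟩
  have hui : u.1 = i := hsub hu
  exact hsub.antisymm (hui ▸ layer_subset_of_inN_outN_eq hY hu)

theorem isCoreset_planeArc_iff {X : Set (ZMod 4 × F × F)} :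
    IsCoreset (planeArc F) X ↔ ∃ i, X = layer F i := by
  constructor
  · rintro ⟨⟨u, hu⟩, hX, hmin⟩
    exact ⟨u.1, (hmin (layer F u.1) ⟨u, rfl⟩ (inN_outN_layer u.1)
      (layer_subset_of_inN_outN_eq hX hu)).symm⟩
  · rintro ⟨i, rfl⟩
    exact isCoreset_layer i

variable (F)

noncomputable def layerEquiv : ZMod 4 ≃ Coreset (planeArc F) :=
  Equiv.ofBijective (fun i => ⟨layer F i, isCoreset_layer i⟩)
    ⟨fun i _ h => (congrArg Subtype.val h).subst
        (motive := fun s => ((i, 0, 0) : ZMod 4 × F × F) ∈ s) rfl,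
      fun X => (isCoreset_planeArc_iff.1 X.2).imp fun _ hi => Subtype.ext hi.symm⟩

noncomputable def layerRelIso : cycle4 ≃r coresetContraction (planeArc F) where
  toEquiv := layerEquiv F
  map_rel_iff' {i j} := by
    constructor
    · rintro ⟨-, u, hu, w, hw, huw⟩
      exact hw.symm.trans (huw.1.trans (congrArg (· + 1) hu))
    · rintro (rfl : j = i + 1)
      refine ⟨fun h => ?_, (i, 0, 0), rfl, _, rfl, planeArc_mk i 0 0 0⟩
      exact absurd ((layerEquiv F).injective h) ((by decide : ∀ i : ZMod 4, i ≠ i + 1) i)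

end Layers

section CopNumber

open Finset

variable {F : Type*} [Field F]

theorem eq_of_planeArc_of_planeArc {u w v v' : ZMod 4 × F × F} (huw : u ≠ w)
    (hu : planeArc F u v) (hw : planeArc F w v) (hu' : planeArc F u v')
    (hw' : planeArc F w v') : v = v' := by
  obtain ⟨i, a, b⟩ := u
  obtain ⟨j, a', b'⟩ := w
  obtain ⟨l, c, d⟩ := v
  obtain ⟨l', c', d'⟩ := v'
  simp only [planeArc] at hu hw hu' hw'
  obtain ⟨rfl, rfl⟩ : l = i + 1 ∧ l' = i + 1 := ⟨hu.1, hu'.1⟩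
  obtain rfl : j = i := add_right_cancel (hw.1.symm.trans hu.1)
  have hdiff : (a - a') * (c - c') = 0 := by linear_combination hw.2 - hu.2 + hu'.2 - hw'.2
  rcases mul_eq_zero.1 hdiff with haa' | hcc'
  · obtain rfl := sub_eq_zero.1 haa'
    obtain rfl : b = b' := by linear_combination hw.2 - hu.2
    exact absurd rfl huw
  · obtain rfl := sub_eq_zero.1 hcc'
    rw [hu.2, hu'.2]

variable [Fintype F]

variable (F) in
noncomputable def closedOut (r : ZMod 4 × F × F) : Finset (ZMod 4 × F × F) :=
  insert r (univ.image fun c => (r.1 + 1, c, r.2.1 * c + r.2.2))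

theorem mem_closedOut {r v : ZMod 4 × F × F} :
    v ∈ closedOut F r ↔ v = r ∨ planeArc F r v := by
  simp only [closedOut, mem_insert, mem_image, mem_univ, true_and, planeArc]
  refine or_congr_right ⟨?_, fun ⟨h₁, h₂⟩ => ⟨v.2.1, ?_⟩⟩
  · rintro ⟨c, rfl⟩
    exact ⟨rfl, rfl⟩
  · exact Prod.ext h₁.symm (Prod.ext rfl h₂.symm)

theorem card_closedOut (r : ZMod 4 × F × F) : #(closedOut F r) = Fintype.card F + 1 := by
  have hinj : Function.Injective fun c : F => (r.1 + 1, c, r.2.1 * c + r.2.2) :=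
    fun c c' h => congrArg (·.2.1) h
  have hr : r ∉ univ.image fun c : F => (r.1 + 1, c, r.2.1 * c + r.2.2) := by
    simp only [mem_image, mem_univ, true_and, not_exists]
    intro c h
    exact (by decide : ∀ i : ZMod 4, i + 1 ≠ i) r.1 (congrArg Prod.fst h)
  rw [closedOut, card_insert_of_notMem hr, card_image_of_injective _ hinj, card_univ]

/-- A cop at `w` threatens at most one of the robber's options at `r`: it threatens `r` itself
only from the layer before, the new vertex `w` only from the layer after, and common
out-neighbours of `w` and `r` only from the same layer. -/
theorem card_threat_le_one {r w : ZMod 4 × F × F} (hwr : w ≠ r) :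
    #((closedOut F r).filter fun v => w = v ∨ planeArc F w v) ≤ 1 := by
  have hcases : ∀ v ∈ (closedOut F r).filter (fun v => w = v ∨ planeArc F w v),
      (v = r ∧ w.1 + 1 = r.1) ∨ (v = w ∧ w.1 = r.1 + 1) ∨
        (planeArc F r v ∧ planeArc F w v ∧ w.1 = r.1) := by
    intro v hv
    rw [mem_filter, mem_closedOut] at hv
    obtain ⟨rfl | hrv, rfl | hwv⟩ := hv
    · exact absurd rfl hwr
    · exact Or.inl ⟨rfl, hwv.1.symm⟩
    · exact Or.inr (Or.inl ⟨rfl, hrv.1⟩)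
    · exact Or.inr (Or.inr ⟨hrv, hwv, add_right_cancel (hwv.1.symm.trans hrv.1)⟩)
  refine card_le_one.2 fun v hv v' hv' => ?_
  rcases hcases v hv with ⟨rfl, h⟩ | ⟨rfl, h⟩ | ⟨hrv, hwv, h⟩ <;>
    rcases hcases v' hv' with ⟨rfl, h'⟩ | ⟨rfl, h'⟩ | ⟨hrv', hwv', h'⟩
  all_goals first
    | rfl
    | exact eq_of_planeArc_of_planeArc hwr.symm hrv hwv hrv' hwv'
    | grind

theorem not_copsWin_planeArc {k : ℕ} (hk : k ≤ Fintype.card F) : ¬ CopsWin (planeArc F) k := by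
  have hF : 1 < Fintype.card F := Fintype.one_lt_card
  refine not_copsWin_of_safe (fun c => ?_) (fun c r hr => ?_)
  · obtain ⟨v, -, hv⟩ := exists_safe_of_card_lt (A := planeArc F) c univ (Fintype.card F + 1)
      (fun i => (card_le_card fun v hv => by
          rw [mem_filter] at hv
          exact mem_closedOut.2 (hv.2.imp Eq.symm id)).trans (card_closedOut (c i)).le)
      (by
        simp only [card_univ, Fintype.card_prod, ZMod.card]
        nlinarith)
    exact ⟨v, hv⟩
  · obtain ⟨v, hv, hsafe⟩ := exists_safe_of_card_lt (A := planeArc F) c (closedOut F r) 1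
      (fun i => card_threat_le_one (hr i)) (by rw [card_closedOut]; omega)
    exact ⟨v, mem_closedOut.1 hv, hsafe⟩

theorem card_lt_copNumber_planeArc : Fintype.card F < copNumber (planeArc F) :=
  lt_copNumber ⟨_, copsWin_card _⟩ fun _ => not_copsWin_planeArc

end CopNumber

/-- For arbitrarily large `n` there is an `n`-vertex strongly connected
oriented graph with cop number at least `√n / 4` whose coreset contraction is
a directed 4-cycle, hence has cop number `2`. -/
theorem stmt_11 (N : ℕ) :
    ∃ n : ℕ, N ≤ n ∧
      ∃ (V : Type) (_ : Fintype V) (A : V → V → Prop),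
        Fintype.card V = n ∧ IsOriented A ∧ StronglyConnected A ∧
        Real.sqrt n / 4 ≤ (copNumber A : ℝ) ∧
        (∃ e : Coreset A ≃ ZMod 4,
          ∀ U W : Coreset A, coresetContraction A U W ↔ e W = e U + 1) ∧
        copNumber (coresetContraction A) = 2 := by
  obtain ⟨q, hNq, hq⟩ := Nat.exists_infinite_primes N
  have : Fact q.Prime := ⟨hq⟩
  have hcard : Fintype.card (ZMod 4 × ZMod q × ZMod q) = 4 * q ^ 2 := by
    simp only [Fintype.card_prod, ZMod.card]
    ring
  have hcop : (q : ℝ) < copNumber (planeArc (ZMod q)) := by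
    exact_mod_cast ZMod.card q ▸ card_lt_copNumber_planeArc (F := ZMod q)
  let e := (layerRelIso (ZMod q)).symm
  refine ⟨4 * q ^ 2, by nlinarith [hq.two_le], _, inferInstance, planeArc (ZMod q), hcard,
    isOriented_planeArc, stronglyConnected_planeArc, ?_,
    ⟨e.toEquiv, fun U W => e.map_rel_iff.symm⟩, by rw [copNumber_congr e, copNumber_cycle4]⟩
  rw [show ((4 * q ^ 2 : ℕ) : ℝ) = (2 * q) ^ 2 by push_cast; ring,
    Real.sqrt_sq (by positivity)]
  linarith

end CopsRobbers
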